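/- Let D ⊂ ℝ² be a bounded open set and λ₊, λ₋ ≥ 0. For a Lipschitz function w : closure(D) → ℝ set J(w) = ∫_D ‖∇w‖² dx + λ₊·|{w > 0} ∩ D| + λ₋·|{w < 0} ∩ D|, where ∇w is the almost-everywhere defined Fréchet derivative and |·| denotes Lebesgue measure. Say w is a minimizer subject to its boundary values if J(w) ≤ J(w') for every Lipschitz w' : closure(D) → ℝ with w' = w on ∂D. Suppose u and v are Lipschitz on closure(D), each a minimizer subject to its own boundary values, and u ≤ v on ∂D. Then min(u, v) and max(u, v) are minimizers subject to their respective boundary values (those of u and of v). -/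

import Mathlib

/-!
The functional is additive on the pair `(min u v, max u v)`. Almost everywhere the gradients of
`min u v` and `max u v` are those of `u` and `v` in some order: Lipschitz functions are
differentiable a.e., and a.e. point of `{u = v}` is a Lebesgue density point, where the tangent
cone of `{u = v}` is the whole plane, so the derivatives of `u` and `v` agree there. The positive
phases of `min` and `max` are the intersection and the union of those of `u` and `v` (and the
other way round for the negative phases). Hence `J(min u v) + J(max u v) = J(u) + J(v)`. Since
`min u v` has the boundary values of `u` and `max u v` those of `v`, minimality gives
`J(u) ≤ J(min u v)` and `J(v) ≤ J(max u v)`, so both are equalities.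
-/

open MeasureTheory Set

noncomputable section

/-- Square of the Euclidean norm of the a.e.-defined gradient of `w : ℝ² → ℝ`,
computed from the Fréchet derivative (Lean's `fderiv` is `0` where `w` is not
differentiable, a null set for Lipschitz `w` by Rademacher's theorem). -/
def gradSq (w : ℝ × ℝ → ℝ) (x : ℝ × ℝ) : ℝ :=
  (fderiv ℝ w x (1, 0)) ^ 2 + (fderiv ℝ w x (0, 1)) ^ 2

/-- The two-phase Alt–Caffarelli functional
`J(w) = ∫_D ‖∇w‖² + λ₊ |{w > 0} ∩ D| + λ₋ |{w < 0} ∩ D|`. -/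
def Jfun (D : Set (ℝ × ℝ)) (lp lm : ℝ) (w : ℝ × ℝ → ℝ) : ℝ :=
  (∫ x in D, gradSq w x) + lp * (volume ({x ∈ D | 0 < w x})).toReal
    + lm * (volume ({x ∈ D | w x < 0})).toReal

/-- `w` is Lipschitz on the closure of `D`. -/
def LipOnClosure (D : Set (ℝ × ℝ)) (w : ℝ × ℝ → ℝ) : Prop :=
  ∃ K : NNReal, LipschitzOnWith K w (closure D)

/-- `w` is a minimizer of `J` over `D` subject to its own boundary values, among
Lipschitz competitors. -/
def IsMinimizerJ (D : Set (ℝ × ℝ)) (lp lm : ℝ) (w : ℝ × ℝ → ℝ) : Prop :=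
  LipOnClosure D w ∧ ∀ w' : ℝ × ℝ → ℝ, LipOnClosure D w' →
    (∀ x ∈ frontier D, w' x = w x) → Jfun D lp lm w ≤ Jfun D lp lm w'

open Metric Filter
open scoped ENNReal NNReal Topology Pointwise

section DensityPoints

variable {E : Type*} [NormedAddCommGroup E] [NormedSpace ℝ E] [FiniteDimensional ℝ E]
  [MeasurableSpace E] [BorelSpace E] (μ : Measure E) [μ.IsAddHaarMeasure]

theorem tangentConeAt_eq_univ_of_density_one {s : Set E} {x : E}
    (h : Tendsto (fun r => μ (s ∩ closedBall x r) / μ (closedBall x r)) (𝓝[>] 0) (𝓝 1)) :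
    tangentConeAt ℝ s x = univ := by
  refine eq_univ_of_forall fun z => ?_
  rw [tangentConeAt_eq_biInter_closure]
  refine mem_iInter₂.2 fun U hU => Metric.mem_closure_iff.2 fun ε hε => ?_
  -- For all small `r > 0`, the density point `x` sees points `x + r • a ∈ s` with `a` near `z`.
  have hmeets := Measure.eventually_nonempty_inter_smul_of_density_one μ s x h
    (closedBall z (ε / 2)) measurableSet_closedBall (measure_closedBall_pos μ z (half_pos hε)).ne'
  have hsmall : ∀ᶠ r in 𝓝[>] (0 : ℝ), {0} + r • closedBall z (ε / 2) ⊆ U :=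
    nhdsWithin_le_nhds (eventually_singleton_add_smul_subset isBounded_closedBall hU)
  obtain ⟨r, ⟨y, hys, hy⟩, hrU, hr⟩ := (hmeets.and (hsmall.and self_mem_nhdsWithin)).exists
  obtain ⟨_, rfl, _, ⟨a, haz, rfl⟩, rfl⟩ := hy
  refine ⟨a, ⟨r⁻¹, trivial, r • a, ⟨hrU ⟨0, rfl, r • a, smul_mem_smul_set haz, zero_add _⟩, hys⟩,
    inv_smul_smul₀ hr.ne' a⟩, ?_⟩
  rw [dist_comm]
  exact (mem_closedBall.1 haz).trans_lt (half_lt_self hε)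

theorem ae_uniqueDiffWithinAt (s : Set E) : ∀ᵐ x ∂μ, x ∈ s → UniqueDiffWithinAt ℝ s x := by
  filter_upwards [ae_imp_of_ae_restrict (Besicovitch.ae_tendsto_measure_inter_div μ s)]
    with x hx hxs
  refine ⟨?_, subset_closure hxs⟩
  simp [tangentConeAt_eq_univ_of_density_one μ (hx hxs)]

theorem ae_fderiv_eq_of_eq {F : Type*} [NormedAddCommGroup F] [NormedSpace ℝ F] (f g : E → F) :
    ∀ᵐ x ∂μ, f x = g x → DifferentiableAt ℝ f x → DifferentiableAt ℝ g x →
      fderiv ℝ f x = fderiv ℝ g x := by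
  filter_upwards [ae_uniqueDiffWithinAt μ {x | f x = g x}] with x hx hfg hf hg
  exact (hx hfg).eq hf.hasFDerivAt.hasFDerivWithinAt
    (hg.hasFDerivAt.hasFDerivWithinAt.congr (fun _ hy => hy) hfg)

theorem LipschitzWith.ae_fderiv_min_max {u v : E → ℝ} {Ku Kv : ℝ≥0}
    (hu : LipschitzWith Ku u) (hv : LipschitzWith Kv v) :
    ∀ᵐ x ∂μ,
      (fderiv ℝ (fun y => min (u y) (v y)) x = fderiv ℝ u x ∧
        fderiv ℝ (fun y => max (u y) (v y)) x = fderiv ℝ v x) ∨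
      (fderiv ℝ (fun y => min (u y) (v y)) x = fderiv ℝ v x ∧
        fderiv ℝ (fun y => max (u y) (v y)) x = fderiv ℝ u x) := by
  filter_upwards [ae_fderiv_eq_of_eq μ (fun y => min (u y) (v y)) u,
    ae_fderiv_eq_of_eq μ (fun y => min (u y) (v y)) v,
    ae_fderiv_eq_of_eq μ (fun y => max (u y) (v y)) u,
    ae_fderiv_eq_of_eq μ (fun y => max (u y) (v y)) v,
    hu.ae_differentiableAt, hv.ae_differentiableAt,
    (hu.min hv).ae_differentiableAt, (hu.max hv).ae_differentiableAt]
    with x hmin_u hmin_v hmax_u hmax_v du dv dmin dmax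
  rcases le_total (u x) (v x) with h | h
  · exact .inl ⟨hmin_u (min_eq_left h) dmin du, hmax_v (max_eq_right h) dmax dv⟩
  · exact .inr ⟨hmin_v (min_eq_right h) dmin dv, hmax_u (max_eq_left h) dmax du⟩

end DensityPoints

lemma gradSq_congr {w w' : ℝ × ℝ → ℝ} {x : ℝ × ℝ} (h : fderiv ℝ w x = fderiv ℝ w' x) :
    gradSq w x = gradSq w' x := by
  simp only [gradSq, h]

lemma LipschitzWith.gradSq_le {w : ℝ × ℝ → ℝ} {K : ℝ≥0} (hw : LipschitzWith K w) (x : ℝ × ℝ) :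
    gradSq w x ≤ 2 * (K : ℝ) ^ 2 := by
  have hunit : ∀ e : ℝ × ℝ, ‖e‖ = 1 → fderiv ℝ w x e ^ 2 ≤ (K : ℝ) ^ 2 := fun e he => by
    rw [← sq_abs]
    gcongr
    calc |fderiv ℝ w x e| ≤ ‖fderiv ℝ w x‖ * ‖e‖ := (fderiv ℝ w x).le_opNorm e
      _ ≤ K := by rw [he, mul_one]; exact norm_fderiv_le_of_lipschitz ℝ hw
  have h₁ := hunit (1, 0) (by simp [Prod.norm_def])
  have h₂ := hunit (0, 1) (by simp [Prod.norm_def])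
  rw [gradSq]
  linarith

lemma LipschitzWith.integrableOn_gradSq {w : ℝ × ℝ → ℝ} {K : ℝ≥0} (hw : LipschitzWith K w)
    {D : Set (ℝ × ℝ)} (hD : volume D ≠ ∞) : IntegrableOn (gradSq w) D := by
  have hmeas : Measurable (gradSq w) :=
    ((measurable_fderiv_apply_const ℝ w _).pow_const 2).add
      ((measurable_fderiv_apply_const ℝ w _).pow_const 2)
  refine Integrable.mono' (integrableOn_const (C := 2 * (K : ℝ) ^ 2) hD)
    hmeas.aestronglyMeasurable (ae_of_all _ fun x => ?_)
  rw [Real.norm_of_nonneg (by unfold gradSq; positivity)]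
  exact hw.gradSq_le x

lemma LipschitzWith.ae_gradSq_min_add_max {u v : ℝ × ℝ → ℝ} {Ku Kv : ℝ≥0}
    (hu : LipschitzWith Ku u) (hv : LipschitzWith Kv v) :
    ∀ᵐ x, gradSq (fun y => min (u y) (v y)) x + gradSq (fun y => max (u y) (v y)) x
      = gradSq u x + gradSq v x := by
  filter_upwards [hu.ae_fderiv_min_max volume hv] with x hx
  rcases hx with ⟨hmin, hmax⟩ | ⟨hmin, hmax⟩
  · rw [gradSq_congr hmin, gradSq_congr hmax]
  · rw [gradSq_congr hmin, gradSq_congr hmax, add_comm]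

lemma Jfun_congr {D : Set (ℝ × ℝ)} (hD : IsOpen D) (lp lm : ℝ) {w w' : ℝ × ℝ → ℝ}
    (h : EqOn w w' D) : Jfun D lp lm w = Jfun D lp lm w' := by
  have hgrad : ∫ x in D, gradSq w x = ∫ x in D, gradSq w' x :=
    setIntegral_congr_fun hD.measurableSet fun x hx =>
      gradSq_congr (eventuallyEq_of_mem (hD.mem_nhds hx) h).fderiv_eq
  have hpos : {x ∈ D | 0 < w x} = {x ∈ D | 0 < w' x} := sep_ext_iff.2 fun x hx => by rw [h hx]
  have hneg : {x ∈ D | w x < 0} = {x ∈ D | w' x < 0} := sep_ext_iff.2 fun x hx => by rw [h hx]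
  rw [Jfun, Jfun, hgrad, hpos, hneg]

lemma Jfun_min_add_max_of_lipschitzWith {D : Set (ℝ × ℝ)} (hD : IsOpen D) (hDf : volume D ≠ ∞)
    (lp lm : ℝ) {u v : ℝ × ℝ → ℝ} {Ku Kv : ℝ≥0} (hu : LipschitzWith Ku u)
    (hv : LipschitzWith Kv v) :
    Jfun D lp lm (fun x => min (u x) (v x)) + Jfun D lp lm (fun x => max (u x) (v x))
      = Jfun D lp lm u + Jfun D lp lm v := by
  have hgrad : (∫ x in D, gradSq (fun y => min (u y) (v y)) x)
      + ∫ x in D, gradSq (fun y => max (u y) (v y)) x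
      = (∫ x in D, gradSq u x) + ∫ x in D, gradSq v x := by
    rw [← integral_add ((hu.min hv).integrableOn_gradSq hDf) ((hu.max hv).integrableOn_gradSq hDf),
      ← integral_add (hu.integrableOn_gradSq hDf) (hv.integrableOn_gradSq hDf)]
    exact integral_congr_ae (ae_restrict_of_ae (hu.ae_gradSq_min_add_max hv))
  have hfin : ∀ p : ℝ × ℝ → Prop, volume {x ∈ D | p x} ≠ ∞ :=
    fun p => measure_ne_top_of_subset (sep_subset D p) hDf
  have hpos : volume.real {x ∈ D | 0 < min (u x) (v x)} + volume.real {x ∈ D | 0 < max (u x) (v x)}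
      = volume.real {x ∈ D | 0 < u x} + volume.real {x ∈ D | 0 < v x} := by
    simp only [lt_min_iff, lt_max_iff, sep_and, sep_or]
    rw [add_comm]
    exact measureReal_union_add_inter
      (hD.measurableSet.inter (measurableSet_lt measurable_const hv.continuous.measurable))
      (hfin _) (hfin _)
  have hneg : volume.real {x ∈ D | min (u x) (v x) < 0} + volume.real {x ∈ D | max (u x) (v x) < 0}
      = volume.real {x ∈ D | u x < 0} + volume.real {x ∈ D | v x < 0} := by
    simp only [min_lt_iff, max_lt_iff, sep_and, sep_or]
    exact measureReal_union_add_inter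
      (hD.measurableSet.inter (measurableSet_lt hv.continuous.measurable measurable_const))
      (hfin _) (hfin _)
  simp only [Jfun, ← measureReal_def]
  linear_combination hgrad + lp * hpos + lm * hneg

lemma LipOnClosure.min {D : Set (ℝ × ℝ)} {u v : ℝ × ℝ → ℝ} (hu : LipOnClosure D u)
    (hv : LipOnClosure D v) : LipOnClosure D (fun x => min (u x) (v x)) := by
  obtain ⟨Ku, hu⟩ := hu
  obtain ⟨Kv, hv⟩ := hv
  exact ⟨_, lipschitzOnWith_iff_restrict.2
    ((lipschitzOnWith_iff_restrict.1 hu).min (lipschitzOnWith_iff_restrict.1 hv))⟩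

lemma LipOnClosure.max {D : Set (ℝ × ℝ)} {u v : ℝ × ℝ → ℝ} (hu : LipOnClosure D u)
    (hv : LipOnClosure D v) : LipOnClosure D (fun x => max (u x) (v x)) := by
  obtain ⟨Ku, hu⟩ := hu
  obtain ⟨Kv, hv⟩ := hv
  exact ⟨_, lipschitzOnWith_iff_restrict.2
    ((lipschitzOnWith_iff_restrict.1 hu).max (lipschitzOnWith_iff_restrict.1 hv))⟩

lemma Jfun_min_add_max {D : Set (ℝ × ℝ)} (hD : IsOpen D) (hDf : volume D ≠ ∞) (lp lm : ℝ)
    {u v : ℝ × ℝ → ℝ} (hu : LipOnClosure D u) (hv : LipOnClosure D v) :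
    Jfun D lp lm (fun x => min (u x) (v x)) + Jfun D lp lm (fun x => max (u x) (v x))
      = Jfun D lp lm u + Jfun D lp lm v := by
  obtain ⟨Ku, hu⟩ := hu
  obtain ⟨Kv, hv⟩ := hv
  obtain ⟨U, hU, hUu⟩ := hu.extend_real
  obtain ⟨V, hV, hVv⟩ := hv.extend_real
  have hUD : EqOn u U D := hUu.mono subset_closure
  have hVD : EqOn v V D := hVv.mono subset_closure
  have hmin : EqOn (fun x => min (u x) (v x)) (fun x => min (U x) (V x)) D := fun x hx => by
    simp only [hUD hx, hVD hx]
  have hmax : EqOn (fun x => max (u x) (v x)) (fun x => max (U x) (V x)) D := fun x hx => by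
    simp only [hUD hx, hVD hx]
  rw [Jfun_congr hD lp lm hUD, Jfun_congr hD lp lm hVD, Jfun_congr hD lp lm hmin,
    Jfun_congr hD lp lm hmax]
  exact Jfun_min_add_max_of_lipschitzWith hD hDf lp lm hU hV

lemma IsMinimizerJ.of_le {D : Set (ℝ × ℝ)} {lp lm : ℝ} {w w' : ℝ × ℝ → ℝ}
    (hw : IsMinimizerJ D lp lm w) (hw' : LipOnClosure D w')
    (hb : ∀ x ∈ frontier D, w' x = w x) (hle : Jfun D lp lm w' ≤ Jfun D lp lm w) :
    IsMinimizerJ D lp lm w' :=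
  ⟨hw', fun w'' hw'' hb'' => hle.trans (hw.2 w'' hw'' fun x hx => (hb'' x hx).trans (hb x hx))⟩

theorem lattice_principle_general (D : Set (ℝ × ℝ)) (hD : IsOpen D)
    (hDb : Bornology.IsBounded D) (lp lm : ℝ)
    (u v : ℝ × ℝ → ℝ) (hu : IsMinimizerJ D lp lm u) (hv : IsMinimizerJ D lp lm v)
    (hb : ∀ x ∈ frontier D, u x ≤ v x) :
    IsMinimizerJ D lp lm (fun x => min (u x) (v x)) ∧
    IsMinimizerJ D lp lm (fun x => max (u x) (v x)) := by
  have hsum := Jfun_min_add_max hD hDb.measure_lt_top.ne lp lm hu.1 hv.1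
  have hmin_bdry : ∀ x ∈ frontier D, min (u x) (v x) = u x := fun x hx => min_eq_left (hb x hx)
  have hmax_bdry : ∀ x ∈ frontier D, max (u x) (v x) = v x := fun x hx => max_eq_right (hb x hx)
  have hu_le := hu.2 _ (hu.1.min hv.1) hmin_bdry
  have hv_le := hv.2 _ (hu.1.max hv.1) hmax_bdry
  exact ⟨hu.of_le (hu.1.min hv.1) hmin_bdry (by linarith),
    hv.of_le (hu.1.max hv.1) hmax_bdry (by linarith)⟩

/-- Lattice principle: if `u` and `v` are minimizers of the two-phase functional on a
bounded open set `D ⊂ ℝ²` subject to their own boundary values and `u ≤ v` on `∂D`,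
then `min(u,v)` and `max(u,v)` are minimizers subject to their respective boundary
values. -/
theorem lattice_principle (D : Set (ℝ × ℝ)) (hD : IsOpen D)
    (hDb : Bornology.IsBounded D) (lp lm : ℝ) (hlp : 0 ≤ lp) (hlm : 0 ≤ lm)
    (u v : ℝ × ℝ → ℝ) (hu : IsMinimizerJ D lp lm u) (hv : IsMinimizerJ D lp lm v)
    (hb : ∀ x ∈ frontier D, u x ≤ v x) :
    IsMinimizerJ D lp lm (fun x => min (u x) (v x)) ∧
    IsMinimizerJ D lp lm (fun x => max (u x) (v x)) :=
  lattice_principle_general D hD hDb lp lm u v hu hv hb
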